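/- arXiv:2111.04095 — 4 statements merged into one kernel-verified Lean document; each statement's English description precedes it below -/
import Mathlib

section
/- In a DAG, if X and Y are distinct, nonadjacent vertices such that X is not an ancestor of Y and Y is not an ancestor of X, then Z = Pa(X) ∪ Pa(Y) d-separates X and Y. -/
variable {V : Type*}

/-- A directed graph (edge relation) is acyclic if no vertex reaches itself by a
nonempty directed path. -/
def Acyclic (E : V → V → Prop) : Prop := ∀ v, ¬ Relation.TransGen E v v

/-- A path in the underlying undirected graph of `E`, from `X` to `Y`:
a list of distinct vertices starting at `X`, ending at `Y`, with consecutive vertices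
joined by an edge of `E` in one of the two directions. -/
def IsUPath (E : V → V → Prop) (X Y : V) (p : List V) : Prop :=
  p.Nodup ∧ p.head? = some X ∧ p.getLast? = some Y ∧ p.Chain' (fun a b => E a b ∨ E b a)

/-- `v` is a collider on the consecutive triple `⟨u, v, w⟩`: both incident path edges
point into `v`. -/
def Collider (E : V → V → Prop) (u v w : V) : Prop := E u v ∧ E w v

/-- A path is active (d-connecting) given `Z`: every collider on it is an ancestor of
some member of `Z` and every non-collider on it is outside `Z`. -/
def Active (E : V → V → Prop) (Z : Set V) (p : List V) : Prop :=
  ∀ u v w : V, [u, v, w] <:+: p →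
    (Collider E u v w → ∃ z ∈ Z, Relation.ReflTransGen E v z) ∧
    (¬ Collider E u v w → v ∉ Z)

/-- `Z` d-separates `X` and `Y`: no path between them is active given `Z`. -/
def DSep (E : V → V → Prop) (Z : Set V) (X Y : V) : Prop :=
  ∀ p : List V, IsUPath E X Y p → ¬ Active E Z p

lemma infix_triple (p : List V) (i : ℕ) (h : i + 2 < p.length) (x : V) :
    [p.getD i x, p.getD (i+1) x, p.getD (i+2) x] <:+: p := by
  have h0 : i < p.length := by omega
  have h1 : i + 1 < p.length := by omega
  rw [List.getD_eq_getElem p x h0, List.getD_eq_getElem p x h1, List.getD_eq_getElem p x h]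
  have hd : p.drop i = p[i] :: p[i+1] :: p[i+2] :: p.drop (i+3) := by
    rw [List.drop_eq_getElem_cons h0, List.drop_eq_getElem_cons h1, List.drop_eq_getElem_cons h]
  refine ⟨p.take i, p.drop (i+3), ?_⟩
  conv_rhs => rw [← List.take_append_drop i p, hd]
  simp

/-- In a finite DAG, if `X ≠ Y` are nonadjacent and neither is an ancestor of the
other, then `Pa(X) ∪ Pa(Y)` d-separates `X` and `Y`. -/
theorem parents_dsep [Fintype V] (E : V → V → Prop) (hacy : Acyclic E) (X Y : V)
    (hne : X ≠ Y) (hadj1 : ¬ E X Y) (hadj2 : ¬ E Y X)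
    (hXY : ¬ Relation.ReflTransGen E X Y) (hYX : ¬ Relation.ReflTransGen E Y X) :
    DSep E ({v | E v X} ∪ {v | E v Y}) X Y := by
  intro p hp hact
  obtain ⟨hnd, hhead, hlast, hchain⟩ := hp
  have hne0 : p ≠ [] := by rintro rfl; simp at hhead
  set g : ℕ → V := fun i => p.getD i X with hgdef
  have hg : ∀ i (h : i < p.length), g i = p[i] := fun i h => List.getD_eq_getElem p X h
  have hlen1 : 1 ≤ p.length := List.length_pos_iff.mpr hne0
  have hX : g 0 = X := by
    rw [hg 0 hlen1, List.getElem_zero hlen1]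
    have := List.head?_eq_head hne0 ▸ hhead
    exact Option.some_injective _ this.symm ▸ rfl
  have hY : g (p.length - 1) = Y := by
    rw [hg _ (by omega), ← List.getLast_eq_getElem hne0]
    have := (List.getLast?_eq_getLast hne0).symm.trans hlast
    exact Option.some_injective _ this
  have hedge : ∀ i, i + 1 < p.length → E (g i) (g (i+1)) ∨ E (g (i+1)) (g i) := by
    intro i hi
    have := List.isChain_iff_getElem.mp hchain i (by omega)
    rw [hg i (by omega), hg (i+1) hi]
    simpa using this
  -- small lengths
  rcases Nat.lt_or_ge p.length 3 with hsmall | hlen3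
  · have h12 : p.length = 1 ∨ p.length = 2 := by omega
    rcases h12 with hl | hl
    · refine hne ?_
      rw [← hX, ← hY, hl]
    · have h1Y : g 1 = Y := by rw [← hY, hl]
      have := hedge 0 (by omega)
      rw [hX, h1Y] at this
      rcases this with h | h
      · exact hadj1 h
      · exact hadj2 h
  -- main case
  by_cases hall : ∀ i, i + 1 < p.length → E (g i) (g (i+1))
  · -- directed path X → Y
    have hwalk : ∀ j, j < p.length → Relation.ReflTransGen E X (g j) := by
      intro j
      induction j with
      | zero => intro _; rw [hX]
      | succ n ih =>
        intro h
        exact (ih (by omega)).tail (hall n h)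
    exact hXY (hY ▸ hwalk (p.length - 1) (by omega))
  · push_neg at hall
    have hex : ∃ i, i + 1 < p.length ∧ ¬ E (g i) (g (i+1)) := hall
    classical
    have hspec := Nat.find_spec hex
    have hmin' := fun j (hj : j < Nat.find hex) => Nat.find_min hex hj
    generalize hkdef : Nat.find hex = k at hspec hmin'
    obtain ⟨hk1, hk2⟩ := hspec
    have hmin : ∀ j < k, E (g j) (g (j+1)) := by
      intro j hj
      have hnm := hmin' j hj
      by_contra hc
      exact hnm ⟨by omega, hc⟩
    have hleft : E (g (k+1)) (g k) := (hedge k hk1).resolve_left hk2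
    rcases Nat.eq_zero_or_pos k with hk0 | hkpos
    · -- first edge points into X
      obtain rfl := hk0
      have hinf : [g 0, g 1, g 2] <:+: p := infix_triple p 0 (by omega) X
      rw [hX] at hinf
      have hzZ : g 1 ∈ ({v | E v X} ∪ {v | E v Y} : Set V) := Or.inl (hX ▸ hleft)
      have := hact X (g 1) (g 2) hinf
      by_cases hcol : Collider E X (g 1) (g 2)
      · exact hacy X (Relation.TransGen.head hcol.1 (Relation.TransGen.single (hX ▸ hleft)))
      · exact this.2 hcol hzZ
    · -- collider at g k
      have hanc : ∀ j ≤ k, Relation.ReflTransGen E X (g j) := by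
        intro j
        induction j with
        | zero => intro _; rw [hX]
        | succ n ih =>
          intro h
          exact (ih (by omega)).tail (hmin n (by omega))
      obtain ⟨m, rfl⟩ : ∃ m, k = m + 1 := ⟨k - 1, by omega⟩
      have hinf : [g m, g (m+1), g (m+2)] <:+: p := infix_triple p m (by omega) X
      have hcol : Collider E (g m) (g (m+1)) (g (m+2)) := ⟨hmin m (by omega), hleft⟩
      obtain ⟨z, hz, hdesc⟩ := (hact (g m) (g (m+1)) (g (m+2)) hinf).1 hcol
      have hXz : Relation.ReflTransGen E X z := (hanc (m+1) le_rfl).trans hdesc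
      rcases hz with hzX | hzY
      · exact hacy X (Relation.TransGen.tail' hXz hzX)
      · exact hXY (hXz.tail hzY)
end

section
/- In a DAG, every vertex is d-separated from its non-descendants (other than its parents) by its parents: if Y is not a descendant of X, Y is not a parent of X, and Y ≠ X, then X and Y are d-separated by Pa(X). (The local Markov property follows from d-separation.) -/
variable {V : Type*}

/-- Local Markov property via d-separation: in a finite DAG, `Pa(X)` d-separates `X`
from any `Y` that is not a descendant of `X`, not a parent of `X`, and `Y ≠ X`. -/
theorem parents_dsep_nondescendant [Fintype V] (E : V → V → Prop) (hacy : Acyclic E)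
    (X Y : V) (hne : Y ≠ X)
    (hdesc : ¬ Relation.ReflTransGen E X Y) (hpa : ¬ E Y X) :
    DSep E {v | E v X} X Y := by
  intro p hp hact
  obtain ⟨hnd, hhead, hlast, hchain⟩ := hp
  have core : ∀ (q : List V) (u a : V), E u a → Relation.TransGen E X a →
      (u :: a :: q).getLast? = some Y → List.Chain' (fun x y => E x y ∨ E y x) (a :: q) →
      Active E {v | E v X} (u :: a :: q) → False := by
    intro q
    induction q with
    | nil =>
      intro u a hua hXa hlast _ _
      have : a = Y := by simpa using hlast
      subst this
      exact hdesc hXa.to_reflTransGen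
    | cons b q ih =>
      intro u a hua hXa hlast hchain hact
      have hinf : [u, a, b] <:+: (u :: a :: b :: q) := ⟨[], q, rfl⟩
      obtain ⟨hab, hchain'⟩ := List.isChain_cons_cons.mp hchain
      rcases hab with hab | hba
      · have hsuf : (a :: b :: q) <:+ (u :: a :: b :: q) := ⟨[u], rfl⟩
        exact ih a b hab (hXa.tail hab) (by simpa using hlast) hchain'
          (fun x y z h => hact x y z (h.trans hsuf.isInfix))
      · obtain ⟨z, hz, hvz⟩ := (hact u a b hinf).1 ⟨hua, hba⟩
        exact hacy X (((hXa.trans_left hvz).tail hz))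
  match p, hhead, hlast, hchain, hact with
  | [x], hhead, hlast, hchain, hact =>
    have hx : x = X := by simpa using hhead
    have hy : x = Y := by simpa using hlast
    exact hne (hy ▸ hx)
  | x :: a :: rest, hhead, hlast, hchain, hact =>
    have hx : x = X := by simpa using hhead
    rw [hx] at hchain hact
    rw [List.getLast?_cons_cons] at hlast
    obtain ⟨hXa, hchain'⟩ := List.isChain_cons_cons.mp hchain
    rcases hXa with hXa | haX
    · exact core rest X a hXa (Relation.TransGen.single hXa) hlast hchain' hact
    · match rest, hlast, hchain', hact with
      | [], hlast, _, _ =>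
        have : a = Y := by simpa using hlast
        exact hpa (this ▸ haX)
      | b :: rest, hlast, hchain', hact =>
        have hinf : [X, a, b] <:+: (X :: a :: b :: rest) := ⟨[], rest, rfl⟩
        have hnc : ¬ Collider E X a b := by
          rintro ⟨hXa2, -⟩
          exact hacy X ((Relation.TransGen.single hXa2).tail haX)
        exact (hact X a b hinf).2 hnc haX
end

section
/- If S is a minimal d-separating set for X and Y in a DAG, then every vertex in S is an ancestor of X or of Y. -/
variable {V : Type*}

/-!
Let `A` be the set of ancestors of `X` or `Y`. If `S` d-separates `X` and `Y`, so does
`S ∩ A`: on a path active given `S ∩ A` every collider lies in `A`, and from a non-collider one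
can follow path edges forward until reaching an endpoint or a collider, so every non-collider
lies in `A` as well and hence outside `S`; the path is then active given `S`. By minimality
`S ∩ A = S`.
-/

open Relation

section

variable {E : V → V → Prop}

def ancestors (E : V → V → Prop) (B : Set V) : Set V := {v | ∃ b ∈ B, ReflTransGen E v b}

theorem subset_ancestors (B : Set V) : B ⊆ ancestors E B := fun b hb => ⟨b, hb, .refl⟩

theorem ancestors_mono {B C : Set V} (h : B ⊆ C) : ancestors E B ⊆ ancestors E C :=
  fun _ ⟨b, hb, hvb⟩ => ⟨b, h hb, hvb⟩

theorem mem_ancestors_of_reflTransGen {B : Set V} {a b : V} (hab : ReflTransGen E a b)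
    (hb : b ∈ ancestors E B) : a ∈ ancestors E B :=
  let ⟨c, hc, hbc⟩ := hb; ⟨c, hc, hab.trans hbc⟩

theorem ancestors_subset_ancestors {B C : Set V} (h : B ⊆ ancestors E C) :
    ancestors E B ⊆ ancestors E C :=
  fun _ ⟨_, hb, hvb⟩ => mem_ancestors_of_reflTransGen hvb (h hb)

theorem mem_ancestors_pair {X Y v : V} :
    v ∈ ancestors E {X, Y} ↔ ReflTransGen E v X ∨ ReflTransGen E v Y := by
  simp [ancestors]

theorem collider_comm {u v w : V} : Collider E u v w ↔ Collider E w v u := and_comm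

theorem IsUPath.reverse {X Y : V} {p : List V} (hp : IsUPath E X Y p) :
    IsUPath E Y X p.reverse := by
  obtain ⟨hnodup, hhead, hlast, hchain⟩ := hp
  refine ⟨List.nodup_reverse.mpr hnodup, by rwa [List.head?_reverse],
    by rwa [List.getLast?_reverse], ?_⟩
  exact List.isChain_reverse.mpr (hchain.imp fun _ _ => Or.symm)

theorem Active.reverse {Z : Set V} {p : List V} (hact : Active E Z p) :
    Active E Z p.reverse := by
  intro u v w huvw
  have hwvu : [w, v, u] <:+: p := by simpa using List.reverse_infix.mpr huvw
  rw [collider_comm]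
  exact hact w v u hwvu

/-- Following path edges forward from `a` we either reach the last vertex or run into a
collider, so `a` is an ancestor of one of them. -/
theorem mem_ancestors_of_isChain_cons_cons {B : Set V} {a b : V} {r : List V}
    (hchain : (a :: b :: r).IsChain (fun a b => E a b ∨ E b a))
    (hlast : ∀ y ∈ (a :: b :: r).getLast?, y ∈ ancestors E B)
    (hcol : ∀ u v w, [u, v, w] <:+: a :: b :: r → Collider E u v w → v ∈ ancestors E B)
    (hab : E a b) : a ∈ ancestors E B := by
  refine mem_ancestors_of_reflTransGen (.single hab) ?_
  induction r generalizing a b with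
  | nil => exact hlast b (by simp)
  | cons c r ih =>
    have htail := (List.isChain_cons_cons.mp hchain).2
    rcases (List.isChain_cons_cons.mp htail).1 with hbc | hcb
    · refine mem_ancestors_of_reflTransGen (.single hbc) (ih htail ?_ ?_ hbc)
      · simpa using hlast
      · exact fun u v w h => hcol u v w (h.trans (List.infix_cons (List.infix_refl _)))
    · exact hcol a b c ⟨[], r, rfl⟩ ⟨hab, hcb⟩

theorem Active.mem_ancestors_of_infix {Z : Set V} {X Y a b : V} {p : List V}
    (hp : IsUPath E X Y p) (hact : Active E Z p) (hab : [a, b] <:+: p) (hE : E a b) :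
    a ∈ ancestors E (insert Y Z) := by
  obtain ⟨s, t, rfl⟩ := hab
  have hsuffix : a :: b :: t <:+ s ++ [a, b] ++ t := ⟨s, by simp⟩
  refine mem_ancestors_of_isChain_cons_cons (hp.2.2.2.suffix hsuffix) ?_ ?_ hE
  · intro y hy
    have hY : (b :: t).getLast? = some Y := by simpa using hp.2.2.1
    rw [List.getLast?_cons_cons] at hy
    obtain rfl : y = Y := Option.some.inj (hy.symm.trans hY)
    exact subset_ancestors _ (Set.mem_insert y Z)
  · intro u v w huvw hc
    obtain ⟨z, hz, hvz⟩ := (hact u v w (huvw.trans hsuffix.isInfix)).1 hc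
    exact ⟨z, Set.mem_insert_of_mem Y hz, hvz⟩

theorem Active.mem_ancestors_of_not_collider {Z : Set V} {X Y u v w : V} {p : List V}
    (hp : IsUPath E X Y p) (hact : Active E Z p) (huvw : [u, v, w] <:+: p)
    (hnc : ¬ Collider E u v w) : v ∈ ancestors E (insert X (insert Y Z)) := by
  have hchain : [u, v, w].IsChain (fun a b => E a b ∨ E b a) := hp.2.2.2.infix huvw
  simp only [List.isChain_cons_cons, List.isChain_singleton, and_true] at hchain
  have hout : E v u ∨ E v w := by
    obtain ⟨huv | hvu, hvw | hwv⟩ := hchain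
    exacts [.inr hvw, absurd ⟨huv, hwv⟩ hnc, .inl hvu, .inl hvu]
  rcases hout with hvu | hvw
  · have hvu' : [v, u] <:+: p.reverse :=
      List.reverse_infix.mpr (((List.prefix_append [u, v] [w]).isInfix).trans huvw)
    exact ancestors_mono (Set.insert_subset_insert (Set.subset_insert Y Z))
      (hact.reverse.mem_ancestors_of_infix hp.reverse hvu' hvu)
  · have hvw' : [v, w] <:+: p := ((List.suffix_cons u [v, w]).isInfix).trans huvw
    exact ancestors_mono (Set.subset_insert X _) (hact.mem_ancestors_of_infix hp hvw' hvw)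

theorem DSep.inter_ancestors {S : Set V} {X Y : V} (hS : DSep E S X Y) :
    DSep E (S ∩ ancestors E {X, Y}) X Y := by
  intro p hp hact
  refine hS p hp fun u v w huvw => ⟨fun hc => ?_, fun hnc hvS => ?_⟩
  · obtain ⟨z, hz, hvz⟩ := (hact u v w huvw).1 hc
    exact ⟨z, hz.1, hvz⟩
  · have hv := hact.mem_ancestors_of_not_collider hp huvw hnc
    refine (hact u v w huvw).2 hnc ⟨hvS, ancestors_subset_ancestors ?_ hv⟩
    have hXY : ({X, Y} : Set V) ⊆ ancestors E {X, Y} := subset_ancestors _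
    exact Set.insert_subset (hXY (Set.mem_insert X {Y}))
      (Set.insert_subset (hXY (Set.mem_insert_of_mem X rfl)) fun z hz => hz.2)
end

theorem minimal_dsep_subset_ancestors_general (E : V → V → Prop)
    (X Y : V) (S : Set V) (hS : DSep E S X Y) (hmin : ∀ T ⊂ S, ¬ DSep E T X Y) :
    ∀ Z ∈ S, Relation.ReflTransGen E Z X ∨ Relation.ReflTransGen E Z Y := by
  intro Z hZ
  by_contra hZA
  refine hmin _ ⟨Set.inter_subset_left, fun hsub => hZA ?_⟩ hS.inter_ancestors
  exact mem_ancestors_pair.mp (hsub hZ).2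

/-- Every vertex of a minimal d-separating set for `X` and `Y` in a finite DAG is an
ancestor of `X` or of `Y`. -/
theorem minimal_dsep_subset_ancestors [Fintype V] (E : V → V → Prop) (hacy : Acyclic E)
    (X Y : V) (S : Set V) (hS : DSep E S X Y) (hmin : ∀ T ⊂ S, ¬ DSep E T X Y) :
    ∀ Z ∈ S, Relation.ReflTransGen E Z X ∨ Relation.ReflTransGen E Z Y :=
  minimal_dsep_subset_ancestors_general E X Y S hS hmin
end

section
/- Removing a vertex from a minimal d-separating set opens a path through it: if S minimally d-separates X and Y in a DAG, then for every Z ∈ S there exists a path between X and Y that is active given S \ {Z} and passes through Z. -/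
/-!
Minimality of `S` makes `S \ {Z}` fail to d-separate `X` and `Y`, so some path `p` is active
given `S \ {Z}`. Every collider of `p` still has a descendant in `S`, and every non-collider
other than `Z` still lies outside `S`; since `S` does d-separate, `Z` must occur on `p` as a
non-collider, and on a path without repeated vertices that is its only occurrence.
-/

variable {V : Type*}

theorem List.Nodup.eq_of_triple_infix {α : Type*} {l : List α} (h : l.Nodup)
    {u v w u' w' : α} (h₁ : [u, v, w] <:+: l) (h₂ : [u', v, w'] <:+: l) : u = u' ∧ w = w' := by
  obtain ⟨s, t, rfl⟩ := h₁
  obtain ⟨s', t', e⟩ := h₂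
  have hsplit : ∀ (s t : List α) (u w : α), s ++ [u, v, w] ++ t = (s ++ [u]) ++ v :: w :: t := by
    simp
  rw [hsplit] at h
  rw [hsplit, hsplit] at e
  obtain ⟨-, hright, hdisj⟩ := List.nodup_append.mp h
  have hv_left : v ∉ s ++ [u] := fun hm => hdisj v hm v List.mem_cons_self rfl
  have hv_right : v ∉ w :: t := (List.nodup_cons.mp hright).1
  obtain ⟨hs, -, ht⟩ := (List.append_cons_inj_of_notMem hv_left hv_right).mp e.symm
  exact ⟨by simpa using congrArg List.getLast? hs, (List.cons_eq_cons.mp ht).1⟩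

section

variable {E : V → V → Prop}

theorem Active.of_diff_singleton {S : Set V} {Z : V} {p : List V} (hp : Active E (S \ {Z}) p)
    (hZ : ∀ u w, [u, Z, w] <:+: p → Collider E u Z w) : Active E S p := by
  intro u v w huvw
  obtain ⟨hcol, hncol⟩ := hp u v w huvw
  refine ⟨fun hc => ?_, fun hnc hvS => ?_⟩
  · obtain ⟨z, hz, hvz⟩ := hcol hc
    exact ⟨z, hz.1, hvz⟩
  · obtain rfl : v = Z := by_contra fun hne => hncol hnc ⟨hvS, hne⟩
    exact hnc (hZ u w huvw)

theorem DSep.exists_noncollider_of_active_diff_singleton {S : Set V} {X Y Z : V} {p : List V}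
    (hS : DSep E S X Y) (hpath : IsUPath E X Y p) (hp : Active E (S \ {Z}) p) :
    ∃ u w, [u, Z, w] <:+: p ∧ ¬ Collider E u Z w := by
  by_contra! hZ
  exact hS p hpath (hp.of_diff_singleton hZ)

end

theorem minimal_dsep_open_path_general (E : V → V → Prop)
    (X Y : V) (S : Set V) (hS : DSep E S X Y) (hmin : ∀ T ⊂ S, ¬ DSep E T X Y) :
    ∀ Z ∈ S, ∃ p : List V, IsUPath E X Y p ∧ Active E (S \ {Z}) p ∧ Z ∈ p ∧
      ∀ u w : V, [u, Z, w] <:+: p → ¬ Collider E u Z w := by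
  intro Z hZ
  obtain ⟨p, hpath, hp⟩ : ∃ p, IsUPath E X Y p ∧ Active E (S \ {Z}) p := by
    simpa [DSep] using hmin _ (Set.sdiff_singleton_ssubset.mpr hZ)
  obtain ⟨u, w, huZw, hnc⟩ := hS.exists_noncollider_of_active_diff_singleton hpath hp
  refine ⟨p, hpath, hp, huZw.subset (by simp), fun u' w' hu'Zw' => ?_⟩
  obtain ⟨rfl, rfl⟩ := hpath.1.eq_of_triple_infix huZw hu'Zw'
  exact hnc

/-- Removing a vertex from a minimal d-separating set opens a path through it: for every
`Z ∈ S` there is a path between `X` and `Y`, active given `S \ {Z}`, on which `Z` lies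
as a non-collider. -/
theorem minimal_dsep_open_path [Fintype V] (E : V → V → Prop) (hacy : Acyclic E)
    (X Y : V) (S : Set V) (hS : DSep E S X Y) (hmin : ∀ T ⊂ S, ¬ DSep E T X Y) :
    ∀ Z ∈ S, ∃ p : List V, IsUPath E X Y p ∧ Active E (S \ {Z}) p ∧ Z ∈ p ∧
      ∀ u w : V, [u, Z, w] <:+: p → ¬ Collider E u Z w :=
  minimal_dsep_open_path_general E X Y S hS hmin
end
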